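/- Let n ≥ 1 be an integer, n/(n+2) < p < 1, q > n(1−p)/2 with q ≠ 1, D ∈ 𝓜ₙ and u ∈ ℝⁿ. Then the q-Rényi entropy of f_p(D,u,·) equals S_q(f_p(D,u,·)) = (n/2)·log(π(2p−n(1−p))/(1−p)) + (1/(1−q))·log[ Γ(1/(1−p))^q · Γ(q/(1−p)−n/2) / ( Γ(1/(1−p)−n/2)^q · Γ(q/(1−p)) ) ] − (1/2)·log det D. -/

import Mathlib

open MeasureTheory Matrix

/-- Normalization constant `A_{n,p}` for `n/(n+2) < p < 1`. -/
noncomputable def gaussA (n : ℕ) (p : ℝ) : ℝ :=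
  ((1 - p) / (2 * p - n * (1 - p))) ^ ((n : ℝ) / 2) *
    Real.Gamma (1 / (1 - p)) /
    (Real.pi ^ ((n : ℝ) / 2) * Real.Gamma (1 / (1 - p) - n / 2))

/-- The `p`-Gaussian density for `n/(n+2) < p < 1`. -/
noncomputable def gaussF (n : ℕ) (p : ℝ) (D : Matrix (Fin n) (Fin n) ℝ)
    (u x : Fin n → ℝ) : ℝ :=
  gaussA n p * Real.sqrt D.det *
    (1 + (1 - p) / (2 * p - n * (1 - p)) * ((x - u) ⬝ᵥ D.mulVec (x - u))) ^ (1 / (p - 1))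

/-- The `q`-Rényi entropy of a density `g` on `ℝⁿ`. -/
noncomputable def renyi (n : ℕ) (q : ℝ) (g : (Fin n → ℝ) → ℝ) : ℝ :=
  1 / (1 - q) * Real.log (∫ x : Fin n → ℝ, g x ^ q)

/-!
Up to a constant factor, `f_p(D,u,·)^q` is the profile `(1 + a⟨x-u, D(x-u)⟩)^(-s)` with
`s = q/(1-p)`. Translating by `u` and substituting `y = √a D^{1/2} x` reduces its integral to
`∫_{ℝⁿ} (1+|y|²)^(-s) dy = π^{n/2} Γ(s-n/2)/Γ(s)`, which polar coordinates and the substitution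
`r² = t/(1-t)` turn into Euler's beta integral; `q > n(1-p)/2` is exactly `s > n/2`. The entropy
is then a matter of taking logarithms.
-/

open Real Set Module

theorem Complex.betaIntegral_ofReal (a b : ℝ) :
    betaIntegral a b = ↑(∫ t in Ioo (0 : ℝ) 1, t ^ (a - 1) * (1 - t) ^ (b - 1)) := by
  rw [betaIntegral, intervalIntegral.integral_of_le zero_le_one, integral_Ioc_eq_integral_Ioo,
    ← integral_complex_ofReal]
  refine setIntegral_congr_fun measurableSet_Ioo fun t ht => ?_
  push_cast
  rw [ofReal_cpow ht.1.le, ofReal_cpow (sub_nonneg.2 ht.2.le)]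
  norm_cast

theorem integral_Ioo_rpow_mul_one_sub_rpow {a b : ℝ} (ha : 0 < a) (hb : 0 < b) :
    ∫ t in Ioo (0 : ℝ) 1, t ^ (a - 1) * (1 - t) ^ (b - 1) =
      Gamma a * Gamma b / Gamma (a + b) := by
  simpa [Complex.betaIntegral_ofReal, ProbabilityTheory.beta] using
    (ProbabilityTheory.beta_eq_betaIntegralReal a b ha hb).symm

theorem image_div_one_sub_Ioo : (fun t : ℝ => t / (1 - t)) '' Ioo 0 1 = Ioi 0 := by
  ext u
  constructor
  · rintro ⟨t, ⟨ht0, ht1⟩, rfl⟩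
    exact div_pos ht0 (sub_pos.2 ht1)
  · intro (hu : 0 < u)
    refine ⟨u / (1 + u), ⟨by positivity, (div_lt_one (by positivity)).2 (by linarith)⟩, ?_⟩
    field_simp
    ring

theorem integral_Ioi_rpow_mul_one_add_rpow_neg {a b : ℝ} (ha : 0 < a) (hb : 0 < b) :
    ∫ u in Ioi (0 : ℝ), u ^ (a - 1) * (1 + u) ^ (-(a + b)) =
      Gamma a * Gamma b / Gamma (a + b) := by
  have hderiv : ∀ t ∈ Ioo (0 : ℝ) 1,
      HasDerivWithinAt (fun t => t / (1 - t)) ((1 - t) ^ 2)⁻¹ (Ioo 0 1) t := by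
    intro t ht
    have ht1 : 1 - t ≠ 0 := (sub_pos.2 ht.2).ne'
    refine ((hasDerivAt_id t).div ((hasDerivAt_id t).const_sub 1) ht1).hasDerivWithinAt
      |>.congr_deriv ?_
    simp only [id]
    field_simp
    ring
  have hinj : InjOn (fun t : ℝ => t / (1 - t)) (Ioo 0 1) := by
    intro t ht s hs hts
    have ht1 : 1 - t ≠ 0 := (sub_pos.2 ht.2).ne'
    have hs1 : 1 - s ≠ 0 := (sub_pos.2 hs.2).ne'
    field_simp at hts
    linarith
  rw [← image_div_one_sub_Ioo,
    integral_image_eq_integral_abs_deriv_smul measurableSet_Ioo hderiv hinj,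
    ← integral_Ioo_rpow_mul_one_sub_rpow ha hb]
  refine setIntegral_congr_fun measurableSet_Ioo fun t ⟨ht0, ht1⟩ => ?_
  have h1t : 0 < 1 - t := sub_pos.2 ht1
  have hsum : 1 + t / (1 - t) = (1 - t)⁻¹ := by field_simp; ring
  rw [smul_eq_mul, hsum, abs_of_pos (by positivity), div_rpow ht0.le h1t.le, inv_rpow h1t.le,
    rpow_neg h1t.le, inv_inv, show b - 1 = a + b - (a - 1) - 2 by ring,
    rpow_sub h1t (a + b - (a - 1)), rpow_sub h1t (a + b), rpow_two]
  field_simp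

theorem integral_Ioi_rpow_mul_one_add_sq_rpow_neg {k s : ℝ} (hk : 0 < k) (hs : k / 2 < s) :
    ∫ y in Ioi (0 : ℝ), y ^ (k - 1) * (1 + y ^ 2) ^ (-s) =
      Gamma (k / 2) * Gamma (s - k / 2) / (2 * Gamma s) := by
  have hsub := integral_comp_rpow_Ioi_of_pos (p := 2) two_pos
    (g := fun u => 2⁻¹ * (u ^ (k / 2 - 1) * (1 + u) ^ (-s)))
  have hs' : -s = -(k / 2 + (s - k / 2)) := by ring
  rw [integral_const_mul, hs', integral_Ioi_rpow_mul_one_add_rpow_neg (by positivity) (by linarith),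
    add_sub_cancel] at hsub
  rw [div_mul_eq_div_div_swap, div_eq_inv_mul _ 2, ← hsub]
  refine setIntegral_congr_fun measurableSet_Ioi fun y (hy : 0 < y) => ?_
  rw [smul_eq_mul, ← rpow_mul hy.le, rpow_two, show (2 : ℝ) - 1 = 1 by norm_num, rpow_one,
    show k - 1 = 2 * (k / 2 - 1) + 1 by ring, rpow_add_one hy.ne']
  ring

theorem InnerProductSpace.integral_one_add_norm_sq_rpow_neg {E : Type*} [NormedAddCommGroup E]
    [InnerProductSpace ℝ E] [FiniteDimensional ℝ E] [MeasurableSpace E] [BorelSpace E]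
    [Nontrivial E] {s : ℝ} (hs : (finrank ℝ E : ℝ) / 2 < s) :
    ∫ x : E, (1 + ‖x‖ ^ 2) ^ (-s) =
      π ^ ((finrank ℝ E : ℝ) / 2) * Gamma (s - finrank ℝ E / 2) / Gamma s := by
  have hd : 0 < finrank ℝ E := finrank_pos
  have hd' : (0 : ℝ) < finrank ℝ E := Nat.cast_pos.2 hd
  have hpow (y : ℝ) : y ^ (finrank ℝ E - 1) = y ^ ((finrank ℝ E : ℝ) - 1) := by
    rw [← rpow_natCast, Nat.cast_sub hd, Nat.cast_one]
  have hsqrt : √π ^ finrank ℝ E = π ^ ((finrank ℝ E : ℝ) / 2) := by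
    rw [sqrt_eq_rpow, ← rpow_natCast, ← rpow_mul pi_pos.le, one_div_mul_eq_div]
  rw [integral_fun_norm_addHaar volume fun r => (1 + r ^ 2) ^ (-s), measureReal_def,
    volume_ball, ENNReal.ofReal_one, one_pow, one_mul, ENNReal.toReal_ofReal (by positivity)]
  simp_rw [smul_eq_mul, hpow, nsmul_eq_mul]
  rw [integral_Ioi_rpow_mul_one_add_sq_rpow_neg hd' hs, hsqrt, Gamma_add_one (by positivity)]
  have hΓ : Gamma (finrank ℝ E / 2) ≠ 0 := (Gamma_pos_of_pos (half_pos hd')).ne'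
  field_simp

theorem integral_one_add_dotProduct_self_rpow_neg {ι : Type*} [Fintype ι] [Nonempty ι] {s : ℝ}
    (hs : (Fintype.card ι : ℝ) / 2 < s) :
    ∫ x : ι → ℝ, (1 + x ⬝ᵥ x) ^ (-s) =
      π ^ ((Fintype.card ι : ℝ) / 2) * Gamma (s - Fintype.card ι / 2) / Gamma s := by
  rw [← finrank_euclideanSpace (𝕜 := ℝ)] at hs ⊢
  rw [← InnerProductSpace.integral_one_add_norm_sq_rpow_neg hs,
    ← (PiLp.volume_preserving_ofLp ι).integral_comp
      (MeasurableEquiv.toLp 2 (ι → ℝ)).symm.measurableEmbedding]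
  congr! 3 with x
  rw [EuclideanSpace.norm_sq_eq]
  simp [dotProduct, sq]

theorem integral_comp_mulVec {ι F : Type*} [Fintype ι] [DecidableEq ι] [NormedAddCommGroup F]
    [NormedSpace ℝ F] {M : Matrix ι ι ℝ} (hM : M.det ≠ 0) (f : (ι → ℝ) → F) :
    ∫ x, f (M *ᵥ x) = |M.det|⁻¹ • ∫ x, f x := by
  have hdet : LinearMap.det (toLin' M) ≠ 0 := by rwa [LinearMap.det_toLin']
  have hinj : LinearMap.ker (toLin' M) = ⊥ :=
    LinearMap.ker_eq_bot.2 (mulVec_injective_iff_isUnit.2 ((isUnit_iff_isUnit_det M).2 hM.isUnit))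
  have hemb : MeasurableEmbedding (toLin' M) :=
    ((toLin' M).isClosedEmbedding_of_injective hinj).measurableEmbedding
  simp_rw [← toLin'_apply]
  rw [← hemb.integral_map, Measure.map_linearMap_addHaar_eq_smul_addHaar volume hdet,
    integral_smul_measure, ENNReal.toReal_ofReal (abs_nonneg _), LinearMap.det_toLin', abs_inv]

open scoped MatrixOrder in
theorem Matrix.PosDef.integral_one_add_dotProduct_mulVec_rpow_neg {ι : Type*} [Fintype ι]
    [DecidableEq ι] [Nonempty ι] {D : Matrix ι ι ℝ} (hD : D.PosDef) {s : ℝ}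
    (hs : (Fintype.card ι : ℝ) / 2 < s) :
    ∫ x : ι → ℝ, (1 + x ⬝ᵥ D *ᵥ x) ^ (-s) =
      (√D.det)⁻¹ *
        (π ^ ((Fintype.card ι : ℝ) / 2) * Gamma (s - Fintype.card ι / 2) / Gamma s) := by
  set S := CFC.sqrt D
  have hSS : S * S = D := CFC.sqrt_mul_sqrt_self D hD.posSemidef.nonneg
  have hST : Sᵀ = S := (CFC.sqrt_nonneg D).posSemidef.isHermitian
  have hdetS : |S.det| = √D.det := by
    rw [← hSS, det_mul, sqrt_mul_self_eq_abs]
  have hquad (x : ι → ℝ) : S *ᵥ x ⬝ᵥ S *ᵥ x = x ⬝ᵥ D *ᵥ x := by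
    rw [← hSS, ← mulVec_mulVec, dotProduct_mulVec, ← mulVec_transpose, hST, dotProduct_comm]
  have hS0 : S.det ≠ 0 := by
    rw [← abs_ne_zero, hdetS]; exact (sqrt_pos.2 hD.det_pos).ne'
  simp_rw [← hquad]
  rw [integral_comp_mulVec hS0 fun y => (1 + y ⬝ᵥ y) ^ (-s), hdetS, smul_eq_mul,
    integral_one_add_dotProduct_self_rpow_neg hs]

/-- The constant `a` in `f_p`. -/
noncomputable def gaussScale (n : ℕ) (p : ℝ) : ℝ :=
  (1 - p) / (2 * p - n * (1 - p))

section GaussF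

variable {n : ℕ} {p : ℝ}

theorem two_mul_sub_mul_one_sub_pos (hp₁ : (n : ℝ) / (n + 2) < p) :
    0 < 2 * p - n * (1 - p) := by
  have := (div_lt_iff₀ (by positivity : (0 : ℝ) < n + 2)).1 hp₁
  linarith

theorem gaussScale_pos (hp₁ : (n : ℝ) / (n + 2) < p) (hp₂ : p < 1) : 0 < gaussScale n p :=
  div_pos (sub_pos.2 hp₂) (two_mul_sub_mul_one_sub_pos hp₁)

theorem half_lt_one_div_one_sub (hp₁ : (n : ℝ) / (n + 2) < p) (hp₂ : p < 1) :
    (n : ℝ) / 2 < 1 / (1 - p) := by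
  have := two_mul_sub_mul_one_sub_pos hp₁
  rw [div_lt_div_iff₀ two_pos (sub_pos.2 hp₂)]
  nlinarith

theorem half_lt_div_one_sub (hp₂ : p < 1) {q : ℝ} (hq : (n : ℝ) * (1 - p) / 2 < q) :
    (n : ℝ) / 2 < q / (1 - p) := by
  rw [lt_div_iff₀ (sub_pos.2 hp₂)]
  linarith

theorem gaussA_pos (hp₁ : (n : ℝ) / (n + 2) < p) (hp₂ : p < 1) : 0 < gaussA n p := by
  have := gaussScale_pos hp₁ hp₂
  have := sub_pos.2 (half_lt_one_div_one_sub hp₁ hp₂)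
  have := sub_pos.2 hp₂
  have := pi_pos
  unfold gaussA
  positivity

theorem log_gaussA (hp₁ : (n : ℝ) / (n + 2) < p) (hp₂ : p < 1) :
    log (gaussA n p) = n / 2 * log (gaussScale n p) + log (Gamma (1 / (1 - p))) -
      (n / 2 * log π + log (Gamma (1 / (1 - p) - n / 2))) := by
  have ha : 0 < (1 - p) / (2 * p - n * (1 - p)) := gaussScale_pos hp₁ hp₂
  have := sub_pos.2 (half_lt_one_div_one_sub hp₁ hp₂)
  have := one_div_pos.2 (sub_pos.2 hp₂)
  have := pi_pos
  rw [gaussA, log_div (by positivity) (by positivity), log_mul (by positivity) (by positivity),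
    log_mul (by positivity) (by positivity), log_rpow ha, log_rpow pi_pos]
  rfl

theorem gaussF_rpow (hp₁ : (n : ℝ) / (n + 2) < p) (hp₂ : p < 1)
    {D : Matrix (Fin n) (Fin n) ℝ} (hD : D.PosDef) (u x : Fin n → ℝ) (q : ℝ) :
    gaussF n p D u x ^ q = (gaussA n p * √D.det) ^ q *
      (1 + (x - u) ⬝ᵥ (gaussScale n p • D) *ᵥ (x - u)) ^ (-(q / (1 - p))) := by
  have hquad : (x - u) ⬝ᵥ (gaussScale n p • D) *ᵥ (x - u) =
      gaussScale n p * ((x - u) ⬝ᵥ D *ᵥ (x - u)) := by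
    rw [smul_mulVec, dotProduct_smul, smul_eq_mul]
  have hbase : 0 ≤ 1 + (x - u) ⬝ᵥ (gaussScale n p • D) *ᵥ (x - u) := by
    have := (hD.smul (gaussScale_pos hp₁ hp₂)).posSemidef.dotProduct_mulVec_nonneg (x - u)
    rw [star_trivial] at this
    linarith
  have hexp : 1 / (p - 1) * q = -(q / (1 - p)) := by
    rw [← neg_sub, div_neg, neg_mul, one_div_mul_eq_div]
  rw [hquad] at hbase ⊢
  change (gaussA n p * √D.det *
    (1 + gaussScale n p * ((x - u) ⬝ᵥ D *ᵥ (x - u))) ^ (1 / (p - 1))) ^ q = _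
  rw [mul_rpow (by have := gaussA_pos hp₁ hp₂; positivity) (rpow_nonneg hbase _),
    ← rpow_mul hbase, hexp]

theorem integral_gaussF_rpow (hn : 1 ≤ n) (hp₁ : (n : ℝ) / (n + 2) < p) (hp₂ : p < 1) {q : ℝ}
    (hq : (n : ℝ) * (1 - p) / 2 < q) {D : Matrix (Fin n) (Fin n) ℝ} (hD : D.PosDef)
    (u : Fin n → ℝ) :
    ∫ x, gaussF n p D u x ^ q = (gaussA n p * √D.det) ^ q *
      ((√(gaussScale n p ^ n * D.det))⁻¹ *
        (π ^ ((n : ℝ) / 2) * Gamma (q / (1 - p) - n / 2) / Gamma (q / (1 - p)))) := by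
  have : Nonempty (Fin n) := ⟨⟨0, hn⟩⟩
  have hs : (Fintype.card (Fin n) : ℝ) / 2 < q / (1 - p) := by
    simpa using half_lt_div_one_sub hp₂ hq
  simp_rw [gaussF_rpow hp₁ hp₂ hD]
  rw [integral_const_mul, integral_sub_right_eq_self
      (fun y => (1 + y ⬝ᵥ (gaussScale n p • D) *ᵥ y) ^ (-(q / (1 - p)))) u,
    (hD.smul (gaussScale_pos hp₁ hp₂)).integral_one_add_dotProduct_mulVec_rpow_neg hs, det_smul,
    Fintype.card_fin]

theorem log_integral_gaussF_rpow (hn : 1 ≤ n) (hp₁ : (n : ℝ) / (n + 2) < p) (hp₂ : p < 1)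
    {q : ℝ} (hq : (n : ℝ) * (1 - p) / 2 < q) {D : Matrix (Fin n) (Fin n) ℝ} (hD : D.PosDef)
    (u : Fin n → ℝ) :
    log (∫ x, gaussF n p D u x ^ q) =
      (1 - q) * (n / 2 * log (π * (2 * p - n * (1 - p)) / (1 - p)) - log D.det / 2) +
        log (Gamma (1 / (1 - p)) ^ q * Gamma (q / (1 - p) - n / 2) /
          (Gamma (1 / (1 - p) - n / 2) ^ q * Gamma (q / (1 - p)))) := by
  have h1p : 0 < 1 - p := sub_pos.2 hp₂
  have hc := two_mul_sub_mul_one_sub_pos hp₁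
  have hA := gaussA_pos hp₁ hp₂
  have := gaussScale_pos hp₁ hp₂
  have := sub_pos.2 (half_lt_one_div_one_sub hp₁ hp₂)
  have := sub_pos.2 (half_lt_div_one_sub hp₂ hq)
  have := one_div_pos.2 h1p
  have hq0 : 0 < q := (div_nonneg (mul_nonneg n.cast_nonneg h1p.le) two_pos.le).trans_lt hq
  have := div_pos hq0 h1p
  have hdet := hD.det_pos
  have := pi_pos
  rw [integral_gaussF_rpow hn hp₁ hp₂ hq hD u, log_mul (by positivity) (by positivity),
    log_rpow (by positivity), log_mul hA.ne' (by positivity), log_sqrt hdet.le,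
    log_mul (by positivity) (by positivity), log_inv, log_sqrt (by positivity),
    log_mul (by positivity) hdet.ne', log_pow, log_div (by positivity) (by positivity),
    log_mul (by positivity) (by positivity), log_rpow pi_pos, log_gaussA hp₁ hp₂,
    mul_div_assoc, log_mul pi_pos.ne' (by positivity), log_div hc.ne' h1p.ne', gaussScale,
    log_div h1p.ne' hc.ne', log_div (by positivity) (by positivity),
    log_mul (by positivity) (by positivity), log_mul (by positivity) (by positivity),
    log_rpow (by positivity), log_rpow (by positivity)]
  ring

end GaussF

/-- `q`-Rényi entropy of the `p`-Gaussian for `n/(n+2) < p < 1`,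
`q > n(1−p)/2`, `q ≠ 1`. -/
theorem renyi_gaussF (n : ℕ) (hn : 1 ≤ n) (p q : ℝ)
    (hp₁ : (n : ℝ) / (n + 2) < p) (hp₂ : p < 1)
    (hq : (n : ℝ) * (1 - p) / 2 < q) (hq1 : q ≠ 1)
    (D : Matrix (Fin n) (Fin n) ℝ) (hD : D.PosDef) (u : Fin n → ℝ) :
    renyi n q (gaussF n p D u) =
      (n / 2) * Real.log (Real.pi * (2 * p - n * (1 - p)) / (1 - p)) +
        1 / (1 - q) * Real.log
          (Real.Gamma (1 / (1 - p)) ^ q * Real.Gamma (q / (1 - p) - n / 2) /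
            (Real.Gamma (1 / (1 - p) - n / 2) ^ q * Real.Gamma (q / (1 - p)))) -
        (1 / 2) * Real.log D.det := by
  have h1q : 1 - q ≠ 0 := sub_ne_zero.2 hq1.symm
  rw [renyi, log_integral_gaussF_rpow hn hp₁ hp₂ hq hD u]
  field_simp
  ring
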